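/- Let p be a probability distribution on ℤ_+ supported on {y_1,...,y_m} with y_min and y_max its smallest and largest support points. Let dist satisfy the decomposition dist(q_1‖q_2) = t(q_1) + Σ_y ℓ(q_1(y), q_2(y)) where b ↦ ℓ(a,b) is strictly decreasing for a > 0 and ℓ(0,b) = 0. Then for any prior Q on [0,∞) placing positive mass outside [y_min, y_max], there exists a prior Q̃ supported on [y_min, y_max] with dist(p‖f_{Q̃}) < dist(p‖f_Q). Hence any minimizer of Q ↦ dist(p‖f_Q) is supported on [y_min, y_max]. -/

import Mathlib

/-!
For `y_min ≤ y ≤ y_max` the Poisson weight `θ ↦ e^{-θ} θ^y / y!` increases strictly on `[0, y]`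
and decreases strictly on `[y, ∞)`. Clamping `θ` to `[y_min, y_max]`, i.e. pushing `Q` forward
along `Set.projIcc`, which is exactly the prior `Q̃`, therefore never decreases the weight and
strictly increases it off `[y_min, y_max]`; so `f_Q̃(y) > f_Q(y)` on the support of `p` as soon as
`Q` charges the complement. As `ℓ(p(y), ·)` is strictly decreasing on the support and `ℓ(0, ·) = 0`
off it, `D(p‖f_Q̃) < D(p‖f_Q)`.
-/

open MeasureTheory Real

/-- Poisson density with mean `θ` at point `y`. -/
noncomputable def poissonPdf (θ : ℝ) (y : ℕ) : ℝ :=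
  Real.exp (-θ) * θ ^ y / (Nat.factorial y)

/-- Poisson mixture density `f_Q`. -/
noncomputable def mixturePdf (Q : Measure ℝ) (y : ℕ) : ℝ :=
  ∫ θ, poissonPdf θ y ∂Q

open Set

lemma poissonPdf_nonneg {θ : ℝ} (hθ : 0 ≤ θ) (y : ℕ) : 0 ≤ poissonPdf θ y := by
  unfold poissonPdf
  positivity

lemma poissonPdf_pos {θ : ℝ} (hθ : 0 < θ) (y : ℕ) : 0 < poissonPdf θ y := by
  unfold poissonPdf
  positivity

lemma poissonPdf_le_one {θ : ℝ} (hθ : 0 ≤ θ) (y : ℕ) : poissonPdf θ y ≤ 1 :=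
  le_hasSum (ProbabilityTheory.hasSum_one_poissonMeasure ⟨θ, hθ⟩) y
    fun n _ => poissonPdf_nonneg hθ n

lemma continuous_poissonPdf (y : ℕ) : Continuous fun θ => poissonPdf θ y := by
  unfold poissonPdf
  fun_prop

lemma hasDerivAt_poissonPdf {θ : ℝ} (hθ : θ ≠ 0) (y : ℕ) :
    HasDerivAt (fun θ => poissonPdf θ y) (poissonPdf θ y * (y / θ - 1)) θ := by
  have hpow : (y : ℝ) * θ ^ (y - 1) = y * θ ^ y / θ := by
    cases y with
    | zero => simp
    | succ n => field_simp; rw [Nat.add_sub_cancel, pow_succ]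
  unfold poissonPdf
  refine (((hasDerivAt_neg θ).exp.mul (hasDerivAt_pow y θ)).div_const _).congr_deriv ?_
  rw [hpow]
  field_simp
  ring

lemma strictMonoOn_poissonPdf (y : ℕ) : StrictMonoOn (fun θ => poissonPdf θ y) (Icc 0 y) := by
  refine strictMonoOn_of_deriv_pos (convex_Icc _ _) (continuous_poissonPdf y).continuousOn ?_
  rw [interior_Icc]
  rintro θ ⟨hθ0, hθy⟩
  rw [(hasDerivAt_poissonPdf hθ0.ne' y).deriv]
  exact mul_pos (poissonPdf_pos hθ0 y) (by rw [sub_pos, one_lt_div hθ0]; exact hθy)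

lemma strictAntiOn_poissonPdf (y : ℕ) : StrictAntiOn (fun θ => poissonPdf θ y) (Ici y) := by
  refine strictAntiOn_of_deriv_neg (convex_Ici _) (continuous_poissonPdf y).continuousOn ?_
  rw [interior_Ici]
  intro θ (hyθ : (y : ℝ) < θ)
  have hθ0 : 0 < θ := (Nat.cast_nonneg y).trans_lt hyθ
  rw [(hasDerivAt_poissonPdf hθ0.ne' y).deriv]
  exact mul_neg_of_pos_of_neg (poissonPdf_pos hθ0 y) (by rw [sub_neg, div_lt_one hθ0]; exact hyθ)

lemma ae_nonneg_of_measure_Iio_eq_zero {Q : Measure ℝ} (hQ : Q (Iio 0) = 0) :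
    ∀ᵐ θ ∂Q, 0 ≤ θ := by
  rw [ae_iff]
  simp only [not_le]
  exact hQ

lemma integrable_poissonPdf {Q : Measure ℝ} [IsFiniteMeasure Q] (hQ : ∀ᵐ θ ∂Q, 0 ≤ θ)
    (y : ℕ) : Integrable (fun θ => poissonPdf θ y) Q := by
  refine (integrable_const (1 : ℝ)).mono' (continuous_poissonPdf y).aestronglyMeasurable ?_
  filter_upwards [hQ] with θ hθ
  rw [Real.norm_of_nonneg (poissonPdf_nonneg hθ y)]
  exact poissonPdf_le_one hθ y

lemma mixturePdf_nonneg {Q : Measure ℝ} (hQ : ∀ᵐ θ ∂Q, 0 ≤ θ) (y : ℕ) :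
    0 ≤ mixturePdf Q y :=
  integral_nonneg_of_ae (hQ.mono fun _ hθ => poissonPdf_nonneg hθ y)

lemma integral_strict_mono_of_ae_le_of_ae_lt_on {α : Type*} [MeasurableSpace α] {μ : Measure α}
    {f g : α → ℝ} {s : Set α} (hf : Integrable f μ) (hg : Integrable g μ) (hle : f ≤ᵐ[μ] g)
    (hlt : ∀ᵐ x ∂μ, x ∈ s → f x < g x) (hs : μ s ≠ 0) :
    ∫ x, f x ∂μ < ∫ x, g x ∂μ := by
  rw [← sub_pos, ← integral_sub hg hf,
    integral_pos_iff_support_of_nonneg_ae (hle.mono fun x => sub_nonneg.2) (hg.sub hf)]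
  refine (pos_iff_ne_zero.2 hs).trans_le (measure_mono_ae ?_)
  filter_upwards [hlt] with x hx hxs
  exact (sub_pos.2 (hx hxs)).ne'

section Clamp

variable {a b : ℝ} {y : ℕ}

lemma poissonPdf_lt_poissonPdf_projIcc (hab : a ≤ b) (ha : 0 ≤ a) (hay : a ≤ y) (hyb : y ≤ b)
    {θ : ℝ} (hθ : 0 ≤ θ) (hθab : θ ∉ Icc a b) :
    poissonPdf θ y < poissonPdf (projIcc a b hab θ) y := by
  rw [mem_Icc, not_and_or, not_le, not_le] at hθab
  rcases hθab with hθa | hbθ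
  · rw [projIcc_of_le_left hab hθa.le]
    exact strictMonoOn_poissonPdf y ⟨hθ, hθa.le.trans hay⟩ ⟨ha, hay⟩ hθa
  · rw [projIcc_of_right_le hab hbθ.le]
    exact strictAntiOn_poissonPdf y (mem_Ici.2 hyb) (mem_Ici.2 (hyb.trans hbθ.le)) hbθ

lemma poissonPdf_le_poissonPdf_projIcc (hab : a ≤ b) (ha : 0 ≤ a) (hay : a ≤ y) (hyb : y ≤ b)
    {θ : ℝ} (hθ : 0 ≤ θ) : poissonPdf θ y ≤ poissonPdf (projIcc a b hab θ) y := by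
  by_cases hθab : θ ∈ Icc a b
  · rw [projIcc_of_mem hab hθab]
  · exact (poissonPdf_lt_poissonPdf_projIcc hab ha hay hyb hθ hθab).le

lemma map_projIcc_compl_Icc (hab : a ≤ b) (Q : Measure ℝ) :
    Q.map (fun θ => (projIcc a b hab θ : ℝ)) (Icc a b)ᶜ = 0 := by
  rw [Measure.map_apply (continuous_projIcc.subtype_val).measurable measurableSet_Icc.compl]
  convert measure_empty (μ := Q)
  exact eq_empty_of_forall_notMem fun θ hθ => hθ (projIcc a b hab θ).2

lemma mixturePdf_lt_mixturePdf_map_projIcc (hab : a ≤ b) (ha : 0 ≤ a) {Q : Measure ℝ}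
    [IsFiniteMeasure Q] (hQ : ∀ᵐ θ ∂Q, 0 ≤ θ) (hout : Q (Icc a b)ᶜ ≠ 0) (hay : a ≤ y)
    (hyb : y ≤ b) : mixturePdf Q y < mixturePdf (Q.map (fun θ => (projIcc a b hab θ : ℝ))) y := by
  have hclamp : Continuous fun θ => (projIcc a b hab θ : ℝ) := continuous_projIcc.subtype_val
  have hmap : ∀ᵐ θ ∂Q.map (fun θ => (projIcc a b hab θ : ℝ)), 0 ≤ θ :=
    (ae_map_iff hclamp.aemeasurable measurableSet_Ici).2
      (Filter.Eventually.of_forall fun θ => ha.trans (projIcc a b hab θ).2.1)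
  rw [mixturePdf, mixturePdf, integral_map hclamp.aemeasurable
    (continuous_poissonPdf y).aestronglyMeasurable]
  refine integral_strict_mono_of_ae_le_of_ae_lt_on (integrable_poissonPdf hQ y)
    ((integrable_poissonPdf hmap y).comp_measurable hclamp.measurable) ?_ ?_ hout
  · filter_upwards [hQ] with θ hθ
    exact poissonPdf_le_poissonPdf_projIcc hab ha hay hyb hθ
  · filter_upwards [hQ] with θ hθ hθab
    exact poissonPdf_lt_poissonPdf_projIcc hab ha hay hyb hθ hθab

end Clamp

lemma tsum_lt_tsum_of_lt_on_support {α : Type*} {ℓ : ℝ → ℝ → ℝ}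
    (hℓanti : ∀ a : ℝ, 0 < a → StrictAntiOn (ℓ a) (Ici 0)) (hℓzero : ∀ b : ℝ, 0 ≤ b → ℓ 0 b = 0)
    {p : α → ℝ} {s : Finset α} (hs : s.Nonempty) (hp0 : ∀ y, 0 ≤ p y)
    (hps : ∀ y, 0 < p y ↔ y ∈ s) {q q' : α → ℝ} (hq : ∀ y, 0 ≤ q y) (hq' : ∀ y, 0 ≤ q' y)
    (hlt : ∀ y ∈ s, q y < q' y) :
    ∑' y, ℓ (p y) (q' y) < ∑' y, ℓ (p y) (q y) := by
  have hzero : ∀ r : α → ℝ, (∀ y, 0 ≤ r y) → ∀ y ∉ s, ℓ (p y) (r y) = 0 := fun r hr y hy => by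
    rw [← (hp0 y).eq_of_not_lt (mt (hps y).1 hy), hℓzero _ (hr y)]
  rw [tsum_eq_sum (hzero q' hq'), tsum_eq_sum (hzero q hq)]
  exact Finset.sum_lt_sum_of_nonempty hs fun y hy =>
    hℓanti (p y) ((hps y).2 hy) (mem_Ici.2 (hq y)) (mem_Ici.2 (hq' y)) (hlt y hy)

theorem minimizer_supported_on_data_range_general
    (p : ℕ → ℝ) (s : Finset ℕ) (hsne : s.Nonempty)
    (hp0 : ∀ y, 0 ≤ p y) (hps : ∀ y, 0 < p y ↔ y ∈ s)
    (t : (ℕ → ℝ) → ℝ) (ℓ : ℝ → ℝ → ℝ)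
    (hℓanti : ∀ a : ℝ, 0 < a → StrictAntiOn (ℓ a) (Set.Ici 0))
    (hℓzero : ∀ b : ℝ, 0 ≤ b → ℓ 0 b = 0)
    (D : (ℕ → ℝ) → (ℕ → ℝ) → ℝ)
    (hD : ∀ q₁ q₂ : ℕ → ℝ, D q₁ q₂ = t q₁ + ∑' y : ℕ, ℓ (q₁ y) (q₂ y)) :
    (∀ Q : Measure ℝ, IsProbabilityMeasure Q → Q (Set.Iio 0) = 0 →
      0 < Q ((Set.Icc (s.min' hsne : ℝ) (s.max' hsne))ᶜ) →
      ∃ Q' : Measure ℝ, IsProbabilityMeasure Q' ∧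
        Q' ((Set.Icc (s.min' hsne : ℝ) (s.max' hsne))ᶜ) = 0 ∧
        D p (mixturePdf Q') < D p (mixturePdf Q)) ∧
    (∀ Qstar : Measure ℝ, IsProbabilityMeasure Qstar → Qstar (Set.Iio 0) = 0 →
      (∀ Q : Measure ℝ, IsProbabilityMeasure Q → Q (Set.Iio 0) = 0 →
        D p (mixturePdf Qstar) ≤ D p (mixturePdf Q)) →
      Qstar ((Set.Icc (s.min' hsne : ℝ) (s.max' hsne))ᶜ) = 0) := by
  set m : ℝ := (s.min' hsne : ℝ)
  set M : ℝ := (s.max' hsne : ℝ)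
  have hmM : m ≤ M := Nat.cast_le.2 (s.min'_le _ (s.max'_mem hsne))
  have hm : 0 ≤ m := Nat.cast_nonneg _
  have hIio : Iio 0 ⊆ (Icc m M)ᶜ := fun θ hθ hθmM => (hm.trans hθmM.1).not_gt hθ
  have improve : ∀ Q : Measure ℝ, IsProbabilityMeasure Q → Q (Iio 0) = 0 →
      0 < Q (Icc m M)ᶜ → ∃ Q' : Measure ℝ, IsProbabilityMeasure Q' ∧ Q' (Icc m M)ᶜ = 0 ∧
        D p (mixturePdf Q') < D p (mixturePdf Q) := by
    intro Q _ hQ0 hout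
    have hQ := ae_nonneg_of_measure_Iio_eq_zero hQ0
    have hQ' := map_projIcc_compl_Icc hmM Q
    have hclamp := (continuous_projIcc (h := hmM)).subtype_val.aemeasurable (μ := Q)
    refine ⟨_, Measure.isProbabilityMeasure_map hclamp, hQ', ?_⟩
    rw [hD, hD, add_lt_add_iff_left]
    exact tsum_lt_tsum_of_lt_on_support hℓanti hℓzero hsne hp0 hps
      (mixturePdf_nonneg hQ)
      (mixturePdf_nonneg (ae_nonneg_of_measure_Iio_eq_zero (measure_mono_null hIio hQ')))
      fun y hy => mixturePdf_lt_mixturePdf_map_projIcc hmM hm hQ hout.ne'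
        (Nat.cast_le.2 (s.min'_le y hy)) (Nat.cast_le.2 (s.le_max' y hy))
  refine ⟨improve, fun Qstar hQstar hQstar0 hmin => ?_⟩
  by_contra hout
  obtain ⟨Q', hQ', hQ'out, hlt⟩ := improve Qstar hQstar hQstar0 (pos_iff_ne_zero.2 hout)
  exact (hmin Q' hQ' (measure_mono_null hIio hQ'out)).not_gt hlt

/-- for a generalized distance `D(q₁‖q₂) = t(q₁) + ∑_y ℓ(q₁(y), q₂(y))`
with `b ↦ ℓ(a,b)` strictly decreasing on `[0,∞)` for `a > 0` and `ℓ(0,·) = 0`, and a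
pmf `p` with finite support `s` (min `y_min`, max `y_max`): any prior `Q` on `[0,∞)`
with positive mass outside `[y_min, y_max]` is strictly improved by some prior `Q̃`
supported on `[y_min, y_max]`; hence every minimizer of `Q ↦ D(p‖f_Q)` is supported
on `[y_min, y_max]`. -/
theorem minimizer_supported_on_data_range
    (p : ℕ → ℝ) (s : Finset ℕ) (hsne : s.Nonempty)
    (hp0 : ∀ y, 0 ≤ p y) (hp1 : HasSum p 1) (hps : ∀ y, 0 < p y ↔ y ∈ s)
    (t : (ℕ → ℝ) → ℝ) (ℓ : ℝ → ℝ → ℝ)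
    (hℓanti : ∀ a : ℝ, 0 < a → StrictAntiOn (ℓ a) (Set.Ici 0))
    (hℓzero : ∀ b : ℝ, 0 ≤ b → ℓ 0 b = 0)
    (D : (ℕ → ℝ) → (ℕ → ℝ) → ℝ)
    (hD : ∀ q₁ q₂ : ℕ → ℝ, D q₁ q₂ = t q₁ + ∑' y : ℕ, ℓ (q₁ y) (q₂ y)) :
    (∀ Q : Measure ℝ, IsProbabilityMeasure Q → Q (Set.Iio 0) = 0 →
      0 < Q ((Set.Icc (s.min' hsne : ℝ) (s.max' hsne))ᶜ) →
      ∃ Q' : Measure ℝ, IsProbabilityMeasure Q' ∧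
        Q' ((Set.Icc (s.min' hsne : ℝ) (s.max' hsne))ᶜ) = 0 ∧
        D p (mixturePdf Q') < D p (mixturePdf Q)) ∧
    (∀ Qstar : Measure ℝ, IsProbabilityMeasure Qstar → Qstar (Set.Iio 0) = 0 →
      (∀ Q : Measure ℝ, IsProbabilityMeasure Q → Q (Set.Iio 0) = 0 →
        D p (mixturePdf Qstar) ≤ D p (mixturePdf Q)) →
      Qstar ((Set.Icc (s.min' hsne : ℝ) (s.max' hsne))ᶜ) = 0) :=
  minimizer_supported_on_data_range_general p s hsne hp0 hps t ℓ hℓanti hℓzero D hD
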